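/- arXiv:2202.06020 — 2 statements merged into one kernel-verified Lean document; each statement's English description precedes it below -/
import Mathlib

section
/- Let k, a, b ≥ 1 and c ≥ 0 be integers. If (k−1)a > c, then there are no k-tilings of the a×b×c hexagon with zero interactions. If (k−1)a ≤ c, then there is a bijection between the set of k-tilings of the a×b×c hexagon with zero interactions and the set of (ka, b, c−(k−1)a)-families. -/
namespace LozengePaths

/-- One step of a lattice path of cells: either the cell directly above (an upward move)
or the cell directly to the right (a rightward move). -/
def stepRel (c d : ℤ × ℤ) : Prop := d = (c.1, c.2 + 1) ∨ d = (c.1 + 1, c.2)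

/-- An `(a,b,c)`-family: an `a`-tuple of paths of cells, where the `i`-th path starts at
cell `(i, 1)` and ends at cell `(b + i, a + c)`, each cell is followed by the cell above
it or the cell to its right, and distinct paths use disjoint sets of cells.
(Cells are indexed by pairs `(x, r)` with `x` the column and `r` the row; `i : Fin a` is
the 0-indexed version of `i ∈ {1, …, a}`.) -/
structure ABCFamily (a b c : ℕ) where
  path : Fin a → List (ℤ × ℤ)
  chain : ∀ i, (path i).Chain' stepRel
  head : ∀ i, (path i).head? = some (((i : ℕ) : ℤ) + 1, 1)
  last : ∀ i, (path i).getLast? = some ((b : ℤ) + ((i : ℕ) : ℤ) + 1, (a : ℤ) + (c : ℤ))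
  disj : ∀ i j, i ≠ j → ∀ x, x ∈ path i → x ∉ path j

/-- The path `l` makes a rightward move out of the cell `C`. -/
def movesRight (l : List (ℤ × ℤ)) (C : ℤ × ℤ) : Prop :=
  ∃ n : ℕ, l[n]? = some C ∧ l[n + 1]? = some (C.1 + 1, C.2)

/-- The path `l` makes a move (rightward or upward) out of the cell `C`. -/
def movesOut (l : List (ℤ × ℤ)) (C : ℤ × ℤ) : Prop :=
  ∃ n : ℕ, l[n]? = some C ∧
    (l[n + 1]? = some (C.1 + 1, C.2) ∨ l[n + 1]? = some (C.1, C.2 + 1))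

/-- The number of interactions of a `k`-tiling `T` of the `a×b×c` hexagon: the number of
triples `(α, β, C)` with colors `α < β` such that the family of color `α` contains a
rightward move out of the cell `C` and the family of color `β` contains a move out of
`C`. -/
noncomputable def numInter {a b c : ℕ} (k : ℕ) (T : Fin k → ABCFamily a b c) : ℕ :=
  Nat.card {q : Fin k × Fin k × (ℤ × ℤ) //
    q.1 < q.2.1 ∧ (∃ i, movesRight ((T q.1).path i) q.2.2) ∧
      (∃ i, movesOut ((T q.2.1).path i) q.2.2)}

/-- A good path: a staircase path of cells from `(x₀, 1)` to `(x₀ + b, N)`. -/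
structure GP (x₀ b N : ℤ) (l : List (ℤ × ℤ)) : Prop where
  chain : l.Chain' stepRel
  head : l.head? = some (x₀, 1)
  last : l.getLast? = some (x₀ + b, N)

namespace GP

variable {x₀ b N : ℤ} {l : List (ℤ × ℤ)}

lemma len_pos (h : GP x₀ b N l) : 0 < l.length := by
  rcases l with _ | ⟨c, t⟩
  · exact absurd h.head (by simp)
  · simp

lemma get0 (h : GP x₀ b N l) : l[0]'h.len_pos = (x₀, 1) := by
  have := h.head
  rw [List.head?_eq_getElem?, List.getElem?_eq_some_iff] at this
  exact this.2

lemma getLast (h : GP x₀ b N l) :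
    l[l.length - 1]'(by have := h.len_pos; omega) = (x₀ + b, N) := by
  have := h.last
  rw [List.getLast?_eq_getElem?, List.getElem?_eq_some_iff] at this
  exact this.2

lemma step (h : GP x₀ b N l) (n : ℕ) (hn : n + 1 < l.length) :
    stepRel (l[n]'(by omega)) (l[n+1]'hn) := by
  have := List.isChain_iff_getElem.mp h.chain n (by omega)
  simpa [List.get_eq_getElem] using this

lemma step_mono (h : GP x₀ b N l) (n : ℕ) (hn : n + 1 < l.length) :
    (l[n]'(by omega)).1 ≤ (l[n+1]'hn).1 ∧ (l[n]'(by omega)).2 ≤ (l[n+1]'hn).2 ∧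
    (l[n+1]'hn).1 + (l[n+1]'hn).2 = (l[n]'(by omega)).1 + (l[n]'(by omega)).2 + 1 := by
  rcases h.step n hn with h1 | h1 <;> rw [h1] <;> simp <;> omega

lemma mono (h : GP x₀ b N l) {n m : ℕ} (hnm : n ≤ m) (hm : m < l.length) :
    (l[n]'(by omega)).1 ≤ (l[m]'hm).1 ∧ (l[n]'(by omega)).2 ≤ (l[m]'hm).2 ∧
    (l[m]'hm).1 + (l[m]'hm).2 = (l[n]'(by omega)).1 + (l[n]'(by omega)).2 + (m - n : ℕ) := by
  induction m with
  | zero => interval_cases n; simp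
  | succ m ih =>
    rcases Nat.eq_or_lt_of_le hnm with rfl | hlt
    · simp
    · have hm' : m < l.length := by omega
      obtain ⟨i1, i2, i3⟩ := ih (by omega) hm'
      obtain ⟨s1, s2, s3⟩ := h.step_mono m hm
      refine ⟨le_trans i1 s1, le_trans i2 s2, ?_⟩
      push_cast [Nat.cast_sub] at i3 s3 ⊢ <;> omega

lemma sum_idx (h : GP x₀ b N l) (n : ℕ) (hn : n < l.length) :
    (l[n]'hn).1 + (l[n]'hn).2 = x₀ + 1 + n := by
  have := (h.mono (Nat.zero_le n) hn).2.2
  rw [h.get0] at this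
  push_cast at this ⊢
  omega

lemma idx_inj (h : GP x₀ b N l) {n m : ℕ} (hn : n < l.length) (hm : m < l.length)
    (he : l[n]'hn = l[m]'hm) : n = m := by
  have h1 := h.sum_idx n hn
  have h2 := h.sum_idx m hm
  rw [he] at h1
  omega

lemma length_eq (h : GP x₀ b N l) : (l.length : ℤ) = b + N := by
  have := h.sum_idx (l.length - 1) (by have := h.len_pos; omega)
  rw [h.getLast] at this
  have := h.len_pos
  push_cast at *
  omega

/-- row and column bounds for any cell, plus index formula. -/
lemma mem_bounds (h : GP x₀ b N l) {x r : ℤ} (hm : (x, r) ∈ l) :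
    x₀ ≤ x ∧ x ≤ x₀ + b ∧ 1 ≤ r ∧ r ≤ N := by
  obtain ⟨n, hn, he⟩ := List.mem_iff_getElem.mp hm
  have h0 := h.mono (Nat.zero_le n) hn
  have hL := h.mono (Nat.le_sub_one_of_lt hn) (by have := h.len_pos; omega)
  rw [h.get0] at h0
  rw [h.getLast] at hL
  rw [he] at h0 hL
  exact ⟨h0.1, hL.1, h0.2.1, hL.2.1⟩

lemma head_mem (h : GP x₀ b N l) : (x₀, 1) ∈ l := by
  rw [← h.get0]; exact List.getElem_mem _

lemma last_mem (h : GP x₀ b N l) : (x₀ + b, N) ∈ l := by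
  rw [← h.getLast]; exact List.getElem_mem _

/-- interval property in a row -/
lemma interval (h : GP x₀ b N l) {x x' z r : ℤ} (h1 : (x, r) ∈ l) (h2 : (x', r) ∈ l)
    (hz1 : x ≤ z) (hz2 : z ≤ x') : (z, r) ∈ l := by
  obtain ⟨n, hn, he⟩ := List.mem_iff_getElem.mp h1
  obtain ⟨m, hm, he'⟩ := List.mem_iff_getElem.mp h2
  have hs1 := h.sum_idx n hn
  have hs2 := h.sum_idx m hm
  rw [he] at hs1; rw [he'] at hs2
  simp only at hs1 hs2
  -- index of (z, r)
  have hnm : n ≤ m := by omega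
  obtain ⟨j, hj⟩ : ∃ j : ℕ, (j : ℤ) = z + r - (x₀ + 1) := ⟨(z + r - (x₀+1)).toNat, by omega⟩
  have hjm : j < l.length := by omega
  have hjn : n ≤ j := by omega
  have hjm' : j ≤ m := by omega
  have hs3 := h.sum_idx j hjm
  have m1 := h.mono hjn hjm
  have m2 := h.mono hjm' hm
  rw [he] at m1; rw [he'] at m2
  have : l[j]'hjm = (z, r) := by
    have : (l[j]'hjm).2 = r := by omega
    have hx : (l[j]'hjm).1 = z := by omega
    exact Prod.ext hx this
  rw [← this]; exact List.getElem_mem _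

-- part 2 of GP lemmas, to append inside namespace GP before `end GP`
lemma last_of_idx (h : GP x₀ b N l) {n : ℕ} (hn : n < l.length) (hnl : n = l.length - 1) :
    l[n]'hn = (x₀ + b, N) := by
  subst hnl
  exact h.getLast

lemma entry_aux (h : GP x₀ b N l) :
    ∀ (n : ℕ) (hn : n < l.length) (x r : ℤ), l[n]'hn = (x, r) → 2 ≤ r →
      ∃ e, e ≤ x ∧ (e, r - 1) ∈ l ∧ (e, r) ∈ l := by
  intro n
  induction n with
  | zero =>
    intro hn x r he hr
    have := h.get0
    rw [he] at this
    rw [Prod.ext_iff] at this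
    simp at this
    omega
  | succ m ih =>
    intro hn x r he hr
    rcases h.step m hn with hs | hs
    · rw [he] at hs
      refine ⟨x, le_refl x, ?_, ?_⟩
      · have hp : l[m]'(by omega) = (x, r - 1) := by
          have h1 := congrArg Prod.fst hs
          have h2 := congrArg Prod.snd hs
          simp at h1 h2
          exact Prod.ext h1.symm (by simp; omega)
        rw [← hp]; exact List.getElem_mem _
      · rw [← he]; exact List.getElem_mem _
    · rw [he] at hs
      have hp : l[m]'(by omega) = (x - 1, r) := by
        have h1 := congrArg Prod.fst hs
        have h2 := congrArg Prod.snd hs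
        simp at h1 h2
        exact Prod.ext (by simp; omega) h2.symm
      obtain ⟨e, he1, he2, he3⟩ := ih (by omega) (x - 1) r hp hr
      exact ⟨e, by omega, he2, he3⟩

lemma entry (h : GP x₀ b N l) {x r : ℤ} (hm : (x, r) ∈ l) (hr : 2 ≤ r) :
    ∃ e, e ≤ x ∧ (e, r - 1) ∈ l ∧ (e, r) ∈ l := by
  obtain ⟨n, hn, he⟩ := List.mem_iff_getElem.mp hm
  exact h.entry_aux n hn x r he hr

lemma exit_aux (h : GP x₀ b N l) :
    ∀ (d : ℕ) (n : ℕ) (hn : n < l.length) (x r : ℤ), d = l.length - 1 - n →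
      l[n]'hn = (x, r) → r < N →
      ∃ m, x ≤ m ∧ (m, r) ∈ l ∧ (m, r + 1) ∈ l := by
  intro d
  induction d with
  | zero =>
    intro n hn x r hd he hr
    exfalso
    have := h.last_of_idx hn (by omega)
    rw [he] at this
    rw [Prod.ext_iff] at this
    simp at this
    omega
  | succ d ih =>
    intro n hn x r hd he hr
    have hn1 : n + 1 < l.length := by omega
    rcases h.step n hn1 with hs | hs
    · rw [he] at hs
      refine ⟨x, le_refl x, by rw [← he]; exact List.getElem_mem _, ?_⟩
      rw [← hs]; exact List.getElem_mem _
    · rw [he] at hs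
      have hs' : l[n+1]'hn1 = (x + 1, r) := by
        rw [hs]
      obtain ⟨m, hm1, hm2, hm3⟩ := ih (n+1) hn1 (x+1) r (by omega) hs' hr
      exact ⟨m, by omega, hm2, hm3⟩

lemma exit (h : GP x₀ b N l) {x r : ℤ} (hm : (x, r) ∈ l) (hr : r < N) :
    ∃ m, x ≤ m ∧ (m, r) ∈ l ∧ (m, r + 1) ∈ l := by
  obtain ⟨n, hn, he⟩ := List.mem_iff_getElem.mp hm
  exact h.exit_aux (l.length - 1 - n) n hn x r rfl he hr

lemma row_exists (h : GP x₀ b N l) {r : ℤ} (h1 : 1 ≤ r) (h2 : r ≤ N) :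
    ∃ x, (x, r) ∈ l := by
  obtain ⟨d, hd⟩ : ∃ d : ℕ, (d : ℤ) = r - 1 := ⟨(r-1).toNat, by omega⟩
  induction d generalizing r with
  | zero =>
    have : r = 1 := by omega
    subst this
    exact ⟨x₀, h.head_mem⟩
  | succ d ih =>
    obtain ⟨x, hx⟩ := ih (r := r - 1) (by omega) (by omega) (by push_cast at hd ⊢; omega)
    obtain ⟨m, _, _, hm⟩ := h.exit hx (by omega)
    exact ⟨m, by simpa using hm⟩

lemma mono_row (h : GP x₀ b N l) {x1 r1 x2 r2 : ℤ} (h1 : (x1, r1) ∈ l) (h2 : (x2, r2) ∈ l)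
    (hr : r1 < r2) : x1 ≤ x2 := by
  obtain ⟨n, hn, he⟩ := List.mem_iff_getElem.mp h1
  obtain ⟨m, hm, he'⟩ := List.mem_iff_getElem.mp h2
  rcases le_or_gt n m with hnm | hnm
  · have := h.mono hnm hm
    rw [he, he'] at this
    exact this.1
  · have := h.mono (le_of_lt hnm) hn
    rw [he, he'] at this
    exfalso
    have := this.2.1
    simp at this
    omega

lemma movesRight_iff (h : GP x₀ b N l) {x r : ℤ} :
    movesRight l (x, r) ↔ (x, r) ∈ l ∧ (x + 1, r) ∈ l := by
  constructor
  · rintro ⟨n, hn1, hn2⟩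
    rw [List.getElem?_eq_some_iff] at hn1 hn2
    obtain ⟨hln, he⟩ := hn1
    obtain ⟨hln2, he2⟩ := hn2
    exact ⟨he ▸ List.getElem_mem _, he2 ▸ List.getElem_mem _⟩
  · rintro ⟨h1, h2⟩
    obtain ⟨n, hn, he⟩ := List.mem_iff_getElem.mp h1
    obtain ⟨m, hm, he'⟩ := List.mem_iff_getElem.mp h2
    have s1 := h.sum_idx n hn
    have s2 := h.sum_idx m hm
    rw [he] at s1; rw [he'] at s2
    simp only at s1 s2
    have : m = n + 1 := by omega
    subst this
    exact ⟨n, List.getElem?_eq_some_iff.mpr ⟨hn, he⟩, List.getElem?_eq_some_iff.mpr ⟨hm, he'⟩⟩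

lemma movesOut_iff (h : GP x₀ b N l) {x r : ℤ} :
    movesOut l (x, r) ↔ (x, r) ∈ l ∧ (x, r) ≠ (x₀ + b, N) := by
  constructor
  · rintro ⟨n, hn1, hn2⟩
    rw [List.getElem?_eq_some_iff] at hn1
    obtain ⟨hln, he⟩ := hn1
    refine ⟨he ▸ List.getElem_mem _, ?_⟩
    have hn1' : n + 1 < l.length := by
      rcases hn2 with hn2 | hn2 <;>
        { rw [List.getElem?_eq_some_iff] at hn2; exact hn2.1 }
    intro hc
    have hL := h.getLast
    have : n = l.length - 1 := h.idx_inj hln (by omega) (by rw [he, hc, hL])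
    omega
  · rintro ⟨h1, h2⟩
    obtain ⟨n, hn, he⟩ := List.mem_iff_getElem.mp h1
    have hn1 : n + 1 < l.length := by
      rcases Nat.lt_or_ge (n+1) l.length with h' | h'
      · exact h'
      · exfalso
        have hnl : n = l.length - 1 := by omega
        apply h2
        rw [← he, h.last_of_idx hn hnl]
    rcases h.step n hn1 with hs | hs
    · exact ⟨n, List.getElem?_eq_some_iff.mpr ⟨hn, he⟩, Or.inr (by
        rw [List.getElem?_eq_some_iff]; exact ⟨hn1, by rw [hs, he]⟩)⟩
    · exact ⟨n, List.getElem?_eq_some_iff.mpr ⟨hn, he⟩, Or.inl (by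
        rw [List.getElem?_eq_some_iff]; exact ⟨hn1, by rw [hs, he]⟩)⟩

end GP
-- chunk 3: shifts, separation lemmas. Appended after `end GP`.

/-- Horizontal translation of a path. -/
def shiftL (t : ℤ) (l : List (ℤ × ℤ)) : List (ℤ × ℤ) := l.map fun c => (c.1 + t, c.2)

@[simp] lemma shiftL_zero (l : List (ℤ × ℤ)) : shiftL 0 l = l := by
  simp [shiftL]

lemma shiftL_shiftL (s t : ℤ) (l : List (ℤ × ℤ)) :
    shiftL s (shiftL t l) = shiftL (t + s) l := by
  unfold shiftL
  rw [List.map_map]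
  congr 1
  funext c
  show ((c.1 + t) + s, c.2) = (c.1 + (t + s), c.2)
  rw [add_assoc]

lemma mem_shiftL {t x r : ℤ} {l : List (ℤ × ℤ)} :
    (x, r) ∈ shiftL t l ↔ (x - t, r) ∈ l := by
  simp only [shiftL, List.mem_map]
  constructor
  · rintro ⟨⟨u, v⟩, hm, he⟩
    rw [Prod.ext_iff] at he
    simp at he
    obtain ⟨h1, h2⟩ := he
    subst h2
    have : u = x - t := by omega
    subst this
    exact hm
  · intro hm
    exact ⟨(x - t, r), hm, by simp⟩

lemma GP.shift {x₀ b N : ℤ} {l : List (ℤ × ℤ)} (h : GP x₀ b N l) (t : ℤ) :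
    GP (x₀ + t) b N (shiftL t l) := by
  constructor
  · refine List.isChain_map_of_isChain _ ?_ h.chain
    rintro ⟨u, v⟩ ⟨u', v'⟩ hs
    rcases hs with hs | hs <;> rw [Prod.ext_iff] at hs <;> simp at hs
    · exact Or.inl (by simp [Prod.ext_iff]; omega)
    · exact Or.inr (by simp [Prod.ext_iff]; omega)
  · rw [shiftL, List.head?_map, h.head]
    simp
  · rw [shiftL, List.getLast?_map, h.last]
    simp [Prod.ext_iff]
    ring

lemma movesRight_shiftL {t : ℤ} {l : List (ℤ × ℤ)} {C : ℤ × ℤ} :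
    movesRight (shiftL t l) C ↔ movesRight l (C.1 - t, C.2) := by
  unfold movesRight shiftL
  constructor
  · rintro ⟨n, h1, h2⟩
    rw [List.getElem?_map] at h1 h2
    rcases hx : l[n]? with _ | c
    · rw [hx] at h1; simp at h1
    rcases hy : l[n+1]? with _ | d
    · rw [hy] at h2; simp at h2
    rw [hx] at h1; rw [hy] at h2
    rw [Option.map_some, Option.some.injEq, Prod.ext_iff] at h1 h2
    simp at h1 h2
    refine ⟨n, ?_, ?_⟩
    · rw [hx, Option.some.injEq, Prod.ext_iff]
      rcases c with ⟨u, v⟩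
      simp at h1 ⊢
      omega
    · rw [hy, Option.some.injEq, Prod.ext_iff]
      rcases d with ⟨u, v⟩
      simp at h2 ⊢
      omega
  · rintro ⟨n, h1, h2⟩
    refine ⟨n, ?_, ?_⟩ <;> rw [List.getElem?_map]
    · rw [h1, Option.map_some, Option.some.injEq, Prod.ext_iff]
      simp
    · rw [h2, Option.map_some, Option.some.injEq, Prod.ext_iff]
      simp
      omega

lemma movesOut_shiftL {t : ℤ} {l : List (ℤ × ℤ)} {C : ℤ × ℤ} :
    movesOut (shiftL t l) C ↔ movesOut l (C.1 - t, C.2) := by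
  unfold movesOut shiftL
  constructor
  · rintro ⟨n, h1, h2⟩
    rw [List.getElem?_map] at h1 h2
    rcases hx : l[n]? with _ | c
    · rw [hx] at h1; simp at h1
    rw [hx] at h1
    rw [Option.map_some, Option.some.injEq, Prod.ext_iff] at h1
    simp at h1
    refine ⟨n, ?_, ?_⟩
    · rw [hx, Option.some.injEq, Prod.ext_iff]
      rcases c with ⟨u, v⟩
      simp at h1 ⊢
      omega
    · rcases hy : l[n+1]? with _ | d
      · rw [hy] at h2; rcases h2 with h2 | h2 <;> simp at h2
      rw [hy] at h2
      rcases h2 with h2 | h2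
      · rw [Option.map_some, Option.some.injEq, Prod.ext_iff] at h2
        left
        simp only [hy, Option.some.injEq, Prod.ext_iff]
        rcases d with ⟨u, v⟩
        simp at h2 ⊢
        omega
      · rw [Option.map_some, Option.some.injEq, Prod.ext_iff] at h2
        right
        simp only [hy, Option.some.injEq, Prod.ext_iff]
        rcases d with ⟨u, v⟩
        simp at h2 ⊢
        omega
  · rintro ⟨n, h1, h2⟩
    refine ⟨n, ?_, ?_⟩
    · rw [List.getElem?_map, h1, Option.map_some, Option.some.injEq, Prod.ext_iff]
      simp
    · rcases h2 with h2 | h2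
      · left
        rw [List.getElem?_map, h2, Option.map_some, Option.some.injEq, Prod.ext_iff]
        simp
        omega
      · right
        rw [List.getElem?_map, h2, Option.map_some, Option.some.injEq, Prod.ext_iff]
        simp

section Separation

variable {b N : ℤ}

/-- Two disjoint paths of a family with ordered start columns are strictly separated
in every row. -/
lemma within {x₀ x₁ : ℤ} {A B : List (ℤ × ℤ)} (hA : GP x₀ b N A) (hB : GP x₁ b N B)
    (hx : x₀ < x₁) (hd : ∀ c : ℤ × ℤ, c ∈ A → c ∉ B) :
    ∀ x y r : ℤ, (x, r) ∈ A → (y, r) ∈ B → x < y := by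
  have main : ∀ (j : ℕ) (x y r : ℤ), (j : ℤ) = r - 1 → (x, r) ∈ A → (y, r) ∈ B → x < y := by
    intro j
    induction j with
    | zero =>
      intro x y r hj hxA hyB
      have hr : r = 1 := by omega
      subst hr
      by_contra hc
      push_neg at hc  -- y ≤ x
      have hy1 : x₀ ≤ y := le_trans (le_of_lt hx) (hB.mem_bounds hyB).1
      have : (y, 1) ∈ A := hA.interval hA.head_mem hxA hy1 hc
      exact hd _ this hyB
    | succ j ih =>
      intro x y r hj hxA hyB
      have hr2 : 2 ≤ r := by omega
      by_contra hc
      push_neg at hc  -- y ≤ x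
      obtain ⟨e, he1, he2, he3⟩ := hB.entry hyB hr2
      obtain ⟨m, hm1, hm2, hm3⟩ := hA.entry hxA hr2
      have hme : m < e := ih m e (r - 1) (by omega) hm2 he2
      have : (y, r) ∈ A := hA.interval hm3 hxA (by omega) hc
      exact hd _ this hyB
  intro x y r hxA hyB
  have hr := (hA.mem_bounds hxA).2.2.1
  exact main (r - 1).toNat x y r (by omega) hxA hyB

/-- Lemma I: if color `α` (path `A`) never moves right out of a cell from which the
path `B` of a higher color moves out, then in every row `A` stays weakly left of `B`
(same start column). -/
lemma lemI {x₀ : ℤ} {A B : List (ℤ × ℤ)} (hA : GP x₀ b N A) (hB : GP x₀ b N B)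
    (hni : ∀ C : ℤ × ℤ, ¬(movesRight A C ∧ movesOut B C)) :
    ∀ x y r : ℤ, (x, r) ∈ A → (y, r) ∈ B → x ≤ y := by
  have main : ∀ (j : ℕ) (x y r : ℤ), (j : ℤ) = r - 1 → (x, r) ∈ A → (y, r) ∈ B → x ≤ y := by
    intro j
    induction j with
    | zero =>
      intro x y r hj hxA hyB
      have hr : r = 1 := by omega
      subst hr
      by_contra hc
      push_neg at hc  -- y < x
      have hy1 : x₀ ≤ y := (hB.mem_bounds hyB).1
      have h1 : (y, 1) ∈ A := hA.interval hA.head_mem hxA hy1 (le_of_lt hc)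
      have h2 : (y + 1, 1) ∈ A := hA.interval hA.head_mem hxA (by omega) hc
      refine hni (y, 1) ⟨hA.movesRight_iff.mpr ⟨h1, h2⟩, hB.movesOut_iff.mpr ⟨hyB, ?_⟩⟩
      have : x ≤ x₀ + b := (hA.mem_bounds hxA).2.1
      simp [Prod.ext_iff]
      intro h
      omega
    | succ j ih =>
      intro x y r hj hxA hyB
      have hr2 : 2 ≤ r := by omega
      by_contra hc
      push_neg at hc  -- y < x
      obtain ⟨e, he1, he2, he3⟩ := hB.entry hyB hr2
      obtain ⟨m, hm1, hm2, hm3⟩ := hA.entry hxA hr2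
      have hme : m ≤ e := ih m e (r - 1) (by omega) hm2 he2
      have h1 : (y, r) ∈ A := hA.interval hm3 hxA (by omega) (le_of_lt hc)
      have h2 : (y + 1, r) ∈ A := hA.interval hm3 hxA (by omega) hc
      refine hni (y, r) ⟨hA.movesRight_iff.mpr ⟨h1, h2⟩, hB.movesOut_iff.mpr ⟨hyB, ?_⟩⟩
      have : x ≤ x₀ + b := (hA.mem_bounds hxA).2.1
      simp [Prod.ext_iff]
      intro h
      omega
  intro x y r hxA hyB
  have hr := (hA.mem_bounds hxA).2.2.1
  exact main (r - 1).toNat x y r (by omega) hxA hyB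

/-- Lemma II: path `B` of a higher color with start column `x₀` stays strictly left,
in every row, of the *next* path `A'` (start column `x₁ > x₀`) of a lower color.
Here `A` is the lower-color path with the same start column as `B`. -/
lemma lemII {x₀ x₁ : ℤ} {A A' B : List (ℤ × ℤ)} (hA : GP x₀ b N A) (hA' : GP x₁ b N A')
    (hB : GP x₀ b N B)
    (hsep : ∀ x y r : ℤ, (x, r) ∈ A → (y, r) ∈ A' → x < y)
    (hni : ∀ C : ℤ × ℤ, ¬(movesRight A' C ∧ movesOut B C)) :
    ∀ x y r : ℤ, (x, r) ∈ B → (y, r) ∈ A' → x < y := by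
  have main : ∀ (d : ℕ) (x y r : ℤ), (d : ℤ) = N - r → (x, r) ∈ B → (y, r) ∈ A' → x < y := by
    intro d
    induction d with
    | zero =>
      intro x y r hd hxB hyA'
      have hr : r = N := by omega
      subst hr
      have h1 : x₀ + b < y := hsep _ _ _ hA.last_mem hyA'
      have h2 : x ≤ x₀ + b := (hB.mem_bounds hxB).2.1
      omega
    | succ d ih =>
      intro x y r hd hxB hyA'
      by_contra hc
      push_neg at hc  -- y ≤ x
      have hrN : r < N := by omega
      obtain ⟨mB, hmB1, hmB2, hmB3⟩ := hB.exit hxB hrN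
      obtain ⟨m, hm1, hm2, hm3⟩ := hA'.exit hyA' hrN
      have hlt : mB < m := ih mB m (r + 1) (by omega) hmB3 hm3
      have h1 : (x, r) ∈ A' := hA'.interval hyA' hm2 hc (by omega)
      have h2 : (x + 1, r) ∈ A' := hA'.interval hyA' hm2 (by omega) (by omega)
      refine hni (x, r) ⟨hA'.movesRight_iff.mpr ⟨h1, h2⟩, hB.movesOut_iff.mpr ⟨hxB, ?_⟩⟩
      simp [Prod.ext_iff]
      intro h
      omega
  intro x y r hxB hyA'
  have hr := (hB.mem_bounds hxB).2.2.2
  exact main (N - r).toNat x y r (by omega) hxB hyA'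

/-- Chained separation: cells in the same row of paths `p < q` of a family differ by at
least `q - p` in column. -/
lemma chainUp {n : ℕ} {Q : ℕ → List (ℤ × ℤ)} (hQ : ∀ p, p < n → GP ((p : ℤ) + 1) b N (Q p))
    (hsep : ∀ p q, p < q → q < n → ∀ x y r : ℤ, (x, r) ∈ Q p → (y, r) ∈ Q q → x < y) :
    ∀ p q, p < q → q < n → ∀ x y r : ℤ, (x, r) ∈ Q p → (y, r) ∈ Q q →
      x + (q - p : ℕ) ≤ y := by
  intro p q hpq hqn
  induction q with
  | zero => omega
  | succ q ih =>
    intro x y r hx hy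
    rcases Nat.lt_or_ge p q with hpq' | hpq'
    · -- use intermediate path q
      have h1 : 1 ≤ r := ((hQ p (by omega)).mem_bounds hx).2.2.1
      have h2 : r ≤ N := ((hQ p (by omega)).mem_bounds hx).2.2.2
      obtain ⟨w, hw⟩ := (hQ q (by omega)).row_exists h1 h2
      have hle := ih hpq' (by omega) x w r hx hw
      have hlt := hsep q (q+1) (by omega) hqn w y r hw hy
      have : (q + 1 - p : ℕ) = (q - p : ℕ) + 1 := by omega
      rw [this]
      push_cast
      push_cast at hle
      omega
    · have : p = q := by omega
      subst this
      have hlt := hsep p (p+1) (by omega) hqn x y r hx hy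
      have : (p + 1 - p : ℕ) = 1 := by omega
      rw [this]
      push_cast
      omega

/-- Dual iteration: going up in path index while going down in rows. -/
lemma dualIter {n : ℕ} {Q : ℕ → List (ℤ × ℤ)} (hQ : ∀ p, p < n → GP ((p : ℤ) + 1) b N (Q p))
    (hsep : ∀ p q, p < q → q < n → ∀ x y r : ℤ, (x, r) ∈ Q p → (y, r) ∈ Q q → x < y) :
    ∀ (L s : ℕ), s + L < n → ∀ z r : ℤ, (z, r) ∈ Q s → (L : ℤ) ≤ r - 1 →
      ∃ m : ℤ, z + L ≤ m ∧ (m, r - L) ∈ Q (s + L) := by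
  intro L
  induction L with
  | zero =>
    intro s hs z r hz _
    exact ⟨z, by simp, by simpa using hz⟩
  | succ L ih =>
    intro s hs z r hz hr
    push_cast at hr
    have hb1 := (hQ s (by omega)).mem_bounds hz
    -- Q (s+1) has a cell in row r - 1, hence an exit cell (w, r-1),(w,r)
    obtain ⟨u, hu⟩ := (hQ (s+1) (by omega)).row_exists (r := r - 1) (by omega) (by omega)
    obtain ⟨w, hw1, hw2, hw3⟩ := (hQ (s+1) (by omega)).exit hu (by omega)
    have hzw : z < w := hsep s (s+1) (by omega) (by omega) z w r hz (by simpa using hw3)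
    obtain ⟨m, hm1, hm2⟩ := ih (s+1) (by omega) w (r - 1) hw2 (by omega)
    refine ⟨m, by push_cast at hm1 ⊢; omega, ?_⟩
    have e1 : r - 1 - L = r - (L + 1 : ℕ) := by push_cast; ring
    have e2 : s + 1 + L = s + (L + 1) := by omega
    rw [← e1, ← e2]
    exact hm2

end Separation

section Assembly

lemma ABCFamily.ext' {a b c : ℕ} {F G : ABCFamily a b c} (h : F.path = G.path) : F = G := by
  cases F; cases G; cases h; rfl

lemma fam_gp {a b c : ℕ} (F : ABCFamily a b c) (i : Fin a) :
    GP ((i : ℤ) + 1) (b : ℤ) ((a : ℤ) + (c : ℤ)) (F.path i) := by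
  refine ⟨F.chain i, F.head i, ?_⟩
  rw [F.last i]
  congr 2
  ring

lemma fam_sep {a b c : ℕ} (F : ABCFamily a b c) {i j : Fin a} (hij : i < j) :
    ∀ x y r : ℤ, (x, r) ∈ F.path i → (y, r) ∈ F.path j → x < y := by
  refine within (fam_gp F i) (fam_gp F j) ?_ (fun C hC hC' => F.disj i j (ne_of_lt hij) C hC hC')
  have : (i : ℕ) < (j : ℕ) := hij
  omega

/-- `numInter k T = 0` iff there are no interactions at all. -/
lemma numInter_zero_iff {a b c : ℕ} {k : ℕ} (T : Fin k → ABCFamily a b c) :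
    numInter k T = 0 ↔ ∀ (α β : Fin k), α < β → ∀ C : ℤ × ℤ,
      ¬((∃ i, movesRight ((T α).path i) C) ∧ (∃ j, movesOut ((T β).path j) C)) := by
  set S : Set (Fin k × Fin k × (ℤ × ℤ)) := {q | q.1 < q.2.1 ∧
    (∃ i, movesRight ((T q.1).path i) q.2.2) ∧ (∃ i, movesOut ((T q.2.1).path i) q.2.2)}
    with hS
  have hfin : S.Finite := by
    have hsub : S ⊆ (Set.univ : Set (Fin k)) ×ˢ ((Set.univ : Set (Fin k)) ×ˢ
        (⋃ (β : Fin k), ⋃ (j : Fin a), {C | C ∈ (T β).path j})) := by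
      rintro ⟨α, β, C⟩ ⟨h1, h2, j, n, hn1, hn2⟩
      refine ⟨trivial, trivial, ?_⟩
      simp only [Set.mem_iUnion]
      refine ⟨β, j, ?_⟩
      rw [List.getElem?_eq_some_iff] at hn1
      obtain ⟨hlt, he⟩ := hn1
      simp only at he
      show C ∈ (T β).path j
      rw [← he]
      exact List.getElem_mem _
    refine Set.Finite.subset ?_ hsub
    refine Set.Finite.prod (Set.finite_univ) (Set.Finite.prod (Set.finite_univ) ?_)
    exact Set.finite_iUnion fun β => Set.finite_iUnion fun j => ((T β).path j).finite_toSet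
  have hcard : numInter k T = Nat.card ↥S := rfl
  constructor
  · intro h0 α β hab C hC
    rw [hcard] at h0
    rcases Nat.card_eq_zero.mp h0 with hE | hI
    · exact hE.false ⟨⟨α, β, C⟩, hab, hC.1, hC.2⟩
    · exact absurd hI (by rw [not_infinite_iff_finite]; exact hfin.to_subtype)
  · intro h
    rw [hcard]
    rw [Nat.card_eq_zero]
    left
    refine ⟨?_⟩
    rintro ⟨⟨α, β, C⟩, h1, h2, h3⟩
    exact h α β h1 C ⟨h2, h3⟩

end Assembly

section BigFam

variable {a b c k : ℕ}

/-- Pairwise no-interaction property of a `k`-tiling. -/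
def NoInt (T : Fin k → ABCFamily a b c) : Prop :=
  ∀ α β : Fin k, α < β → ∀ C : ℤ × ℤ,
    ¬((∃ i, movesRight ((T α).path i) C) ∧ (∃ j, movesOut ((T β).path j) C))

/-- The `p`-th path of the interleaved big family associated to a `k`-tiling. -/
def bigPath (T : Fin k → ABCFamily a b c) (hk : 0 < k) (p : ℕ) : List (ℤ × ℤ) :=
  if h : p < k * a then
    shiftL ((p : ℤ) - ((p / k : ℕ) : ℤ))
      ((T ⟨p % k, Nat.mod_lt p hk⟩).path ⟨p / k, by
        rw [Nat.div_lt_iff_lt_mul hk]; rwa [mul_comm] at h⟩)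
  else []

lemma bigPath_gp (T : Fin k → ABCFamily a b c) (hk : 0 < k) {p : ℕ} (hp : p < k * a) :
    GP ((p : ℤ) + 1) (b : ℤ) ((a : ℤ) + (c : ℤ)) (bigPath T hk p) := by
  have h0 := (fam_gp (T ⟨p % k, Nat.mod_lt p hk⟩) ⟨p / k, by
      rw [Nat.div_lt_iff_lt_mul hk]; rwa [mul_comm] at hp⟩).shift
      ((p : ℤ) - ((p / k : ℕ) : ℤ))
  simp only [Fin.val_mk] at h0
  have e : ((p / k : ℕ) : ℤ) + 1 + ((p : ℤ) - ((p / k : ℕ) : ℤ)) = (p : ℤ) + 1 := by ring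
  rw [e] at h0
  unfold bigPath
  rw [dif_pos hp]
  exact h0

lemma mem_bigPath (T : Fin k → ABCFamily a b c) (hk : 0 < k) {p : ℕ} (hp : p < k * a)
    {x r : ℤ} :
    (x, r) ∈ bigPath T hk p ↔
      (x - ((p : ℤ) - ((p / k : ℕ) : ℤ)), r) ∈
        (T ⟨p % k, Nat.mod_lt p hk⟩).path ⟨p / k, by
          rw [Nat.div_lt_iff_lt_mul hk]; rwa [mul_comm] at hp⟩ := by
  unfold bigPath
  rw [dif_pos hp]
  exact mem_shiftL

lemma bigPath_sep (T : Fin k → ABCFamily a b c) (hk : 0 < k) (hni : NoInt T) :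
    ∀ p q, p < q → q < k * a → ∀ x y r : ℤ,
      (x, r) ∈ bigPath T hk p → (y, r) ∈ bigPath T hk q → x < y := by
  intro p q hpq hq x y r hx hy
  have hp : p < k * a := lt_trans hpq hq
  have hia : p / k < a := by rw [Nat.div_lt_iff_lt_mul hk]; rwa [mul_comm] at hp
  have hja : q / k < a := by rw [Nat.div_lt_iff_lt_mul hk]; rwa [mul_comm] at hq
  rw [mem_bigPath T hk hp] at hx
  rw [mem_bigPath T hk hq] at hy
  set i := p / k with hidef
  set j := q / k with hjdef
  set A := p % k with hAdef
  set B := q % k with hBdef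
  have hpe : k * i + A = p := Nat.div_add_mod p k
  have hqe : k * j + B = q := Nat.div_add_mod q k
  have hAk : A < k := Nat.mod_lt p hk
  have hBk : B < k := Nat.mod_lt q hk
  rcases lt_trichotomy i j with hij | hij | hij
  · -- i < j
    set D := j - i with hDdef
    have hD1 : 1 ≤ D := by omega
    have hjiD : j = i + D := by omega
    have hprod : (k : ℤ) * (j : ℤ) = (k : ℤ) * (i : ℤ) + (k : ℤ) * (D : ℤ) := by
      rw [hjiD]; push_cast; ring
    have hkD1 : (k : ℤ) * (D : ℤ) ≥ (k : ℤ) + (D : ℤ) - 1 := by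
      have hk1 : (1 : ℤ) ≤ (k : ℤ) := by exact_mod_cast hk
      have hD1' : (1 : ℤ) ≤ (D : ℤ) := by exact_mod_cast hD1
      have h2 : ((k : ℤ) - 1) * ((D : ℤ) - 1) ≥ 0 := mul_nonneg (by omega) (by omega)
      nlinarith
    have hpz : (p : ℤ) = (k : ℤ) * (i : ℤ) + (A : ℤ) := by exact_mod_cast hpe.symm
    have hqz : (q : ℤ) = (k : ℤ) * (i : ℤ) + (k : ℤ) * (D : ℤ) + (B : ℤ) := by
      rw [← hprod]; exact_mod_cast hqe.symm
    rcases lt_trichotomy A B with hAB | hAB | hAB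
    · -- A < B : lemI to color B path i, then within color B from i to j
      obtain ⟨z, hz⟩ := (fam_gp (T ⟨B, hBk⟩) ⟨i, by omega⟩).row_exists
        (r := r) ((fam_gp (T ⟨A, hAk⟩) ⟨i, hia⟩).mem_bounds hx).2.2.1
        ((fam_gp (T ⟨A, hAk⟩) ⟨i, hia⟩).mem_bounds hx).2.2.2
      have h1 : x - ((p : ℤ) - (i : ℤ)) ≤ z := by
        refine lemI (fam_gp (T ⟨A, hAk⟩) ⟨i, hia⟩) (fam_gp (T ⟨B, hBk⟩) ⟨i, by omega⟩)
          ?_ _ _ r hx hz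
        intro C hC
        exact hni ⟨A, hAk⟩ ⟨B, hBk⟩ (by simp [Fin.lt_def]; omega) C
          ⟨⟨_, hC.1⟩, ⟨_, hC.2⟩⟩
      have h2 : z < y - ((q : ℤ) - (j : ℤ)) := by
        refine fam_sep (T ⟨B, hBk⟩) (i := ⟨i, by omega⟩) (j := ⟨j, hja⟩)
          (by simp [Fin.lt_def]; omega) _ _ r hz hy
      omega
    · -- A = B : within color
      have hABz : (A : ℤ) = (B : ℤ) := by exact_mod_cast hAB
      have hDz : (j : ℤ) = (i : ℤ) + (D : ℤ) := by exact_mod_cast hjiD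
      have hTeq : (⟨A, hAk⟩ : Fin k) = ⟨B, hBk⟩ := by simp [Fin.ext_iff]; omega
      rw [hTeq] at hx
      have h1 : x - ((p : ℤ) - (i : ℤ)) < y - ((q : ℤ) - (j : ℤ)) :=
        fam_sep (T ⟨B, hBk⟩) (i := ⟨i, by omega⟩) (j := ⟨j, hja⟩)
          (by simp [Fin.lt_def]; omega) _ _ r hx hy
      have hkD2 : (k : ℤ) * (D : ℤ) ≥ (D : ℤ) := by
        have := mul_le_mul_of_nonneg_right (by exact_mod_cast hk : (1 : ℤ) ≤ (k : ℤ))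
          (by positivity : (0 : ℤ) ≤ (D : ℤ))
        omega
      omega
    · -- A > B : lemII from color B path i+1
      have hi1 : i + 1 < a := by omega
      have hni' : ∀ C : ℤ × ℤ, ¬(movesRight ((T ⟨B, hBk⟩).path ⟨i+1, hi1⟩) C ∧
          movesOut ((T ⟨A, hAk⟩).path ⟨i, hia⟩) C) := by
        intro C hC
        exact hni ⟨B, hBk⟩ ⟨A, hAk⟩ (by simp [Fin.lt_def]; omega) C
          ⟨⟨_, hC.1⟩, ⟨_, hC.2⟩⟩
      have hstep : ∀ x' y' r' : ℤ, (x', r') ∈ (T ⟨A, hAk⟩).path ⟨i, hia⟩ →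
          (y', r') ∈ (T ⟨B, hBk⟩).path ⟨i+1, hi1⟩ → x' < y' := by
        refine lemII (A := (T ⟨B, hBk⟩).path ⟨i, by omega⟩) (fam_gp (T ⟨B, hBk⟩) ⟨i, by omega⟩)
          (fam_gp (T ⟨B, hBk⟩) ⟨i+1, hi1⟩) ?_ ?_ hni'
        · have h0 := fam_gp (T ⟨A, hAk⟩) ⟨i, hia⟩
          exact h0
        · exact fam_sep (T ⟨B, hBk⟩) (by simp [Fin.lt_def])
      have h1 : x - ((p : ℤ) - (i : ℤ)) < y - ((q : ℤ) - (j : ℤ)) := by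
        rcases Nat.eq_or_lt_of_le (show i + 1 ≤ j by omega) with hij1 | hij1
        · have hJ : (⟨i+1, hi1⟩ : Fin a) = ⟨j, hja⟩ := by simp [Fin.ext_iff]; omega
          rw [hJ] at hstep
          exact hstep _ _ r hx hy
        · obtain ⟨z, hz⟩ := (fam_gp (T ⟨B, hBk⟩) ⟨i+1, hi1⟩).row_exists
            (r := r) ((fam_gp (T ⟨A, hAk⟩) ⟨i, hia⟩).mem_bounds hx).2.2.1
            ((fam_gp (T ⟨A, hAk⟩) ⟨i, hia⟩).mem_bounds hx).2.2.2
          have hz1 := hstep _ _ r hx hz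
          have hz2 : z < y - ((q : ℤ) - (j : ℤ)) :=
            fam_sep (T ⟨B, hBk⟩) (i := ⟨i+1, hi1⟩) (j := ⟨j, hja⟩)
              (by simp [Fin.lt_def]; omega) _ _ r hz hy
          omega
      omega
  · -- i = j : colors must satisfy A < B
    have hke : k * i = k * j := by rw [hij]
    have hkez : (k : ℤ) * (i : ℤ) = (k : ℤ) * (j : ℤ) := by exact_mod_cast hke
    have hABlt : A < B := by omega
    have hJ : (⟨i, hia⟩ : Fin a) = ⟨j, hja⟩ := by simp [Fin.ext_iff]; omega
    rw [hJ] at hx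
    have h1 : x - ((p : ℤ) - (i : ℤ)) ≤ y - ((q : ℤ) - (j : ℤ)) := by
      refine lemI (fam_gp (T ⟨A, hAk⟩) ⟨j, hja⟩) (fam_gp (T ⟨B, hBk⟩) ⟨j, hja⟩)
        ?_ _ _ r hx hy
      intro C hC
      exact hni ⟨A, hAk⟩ ⟨B, hBk⟩ (by simp [Fin.lt_def]; omega) C
        ⟨⟨_, hC.1⟩, ⟨_, hC.2⟩⟩
    have hpz : (p : ℤ) = (k : ℤ) * (i : ℤ) + (A : ℤ) := by exact_mod_cast hpe.symm
    have hqz : (q : ℤ) = (k : ℤ) * (i : ℤ) + (B : ℤ) := by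
      rw [hij]; exact_mod_cast hqe.symm
    have hijz : (i : ℤ) = (j : ℤ) := by exact_mod_cast hij
    omega
  · -- i > j : impossible
    exfalso
    have h1 : k * (j + 1) ≤ k * i := Nat.mul_le_mul_left k (by omega)
    have h2 : k * (j + 1) = k * j + k := by ring
    omega

end BigFam

section InvFam

variable {a b c k : ℕ}

lemma keyN (hk : 0 < k) (hca : (k - 1) * a ≤ c) :
    ((k * a : ℕ) : ℤ) + ((c - (k - 1) * a : ℕ) : ℤ) = (a : ℤ) + (c : ℤ) := by
  have e : k * a = (k - 1) * a + a := by
    rcases k with _ | k'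
    · omega
    · simp only [Nat.succ_sub_one]
      ring
  have e' : ((k * a : ℕ) : ℤ) = (((k - 1) * a : ℕ) : ℤ) + (a : ℤ) := by exact_mod_cast e
  rw [Nat.cast_sub hca]
  omega

/-- ℕ-indexed access to the paths of a family. -/
def famQ {n b' c' : ℕ} (G : ABCFamily n b' c') (p : ℕ) : List (ℤ × ℤ) :=
  if h : p < n then G.path ⟨p, h⟩ else []

lemma famQ_gp {n b' c' : ℕ} (G : ABCFamily n b' c') {p : ℕ} (hp : p < n) :
    GP ((p : ℤ) + 1) (b' : ℤ) ((n : ℤ) + (c' : ℤ)) (famQ G p) := by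
  unfold famQ
  rw [dif_pos hp]
  have h := fam_gp G ⟨p, hp⟩
  simpa using h

lemma famQ_mem {n b' c' : ℕ} (G : ABCFamily n b' c') {p : ℕ} (hp : p < n) {x r : ℤ} :
    (x, r) ∈ famQ G p ↔ (x, r) ∈ G.path ⟨p, hp⟩ := by
  unfold famQ
  rw [dif_pos hp]

lemma famQ_sep {n b' c' : ℕ} (G : ABCFamily n b' c') :
    ∀ p q, p < q → q < n → ∀ x y r : ℤ, (x, r) ∈ famQ G p → (y, r) ∈ famQ G q → x < y := by
  intro p q hpq hq x y r hx hy
  rw [famQ_mem G (lt_trans hpq hq)] at hx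
  rw [famQ_mem G hq] at hy
  exact fam_sep G (i := ⟨p, lt_trans hpq hq⟩) (j := ⟨q, hq⟩) (by simpa [Fin.lt_def]) x y r hx hy

lemma famQ_chain {n b' c' : ℕ} (G : ABCFamily n b' c') {p q : ℕ} (hpq : p < q) (hq : q < n)
    {x y r : ℤ} (hx : (x, r) ∈ famQ G p) (hy : (y, r) ∈ famQ G q) :
    x + ((q - p : ℕ) : ℤ) ≤ y :=
  chainUp (fun p hp => famQ_gp G hp) (famQ_sep G) p q hpq hq x y r hx hy

lemma idx_lt (hk : 0 < k) (i : Fin a) (m : Fin k) : i.val * k + m.val < k * a := by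
  have h1 : (i.val + 1) * k ≤ a * k := Nat.mul_le_mul_right k i.2
  have h2 : (i.val + 1) * k = i.val * k + k := by ring
  have h3 : a * k = k * a := Nat.mul_comm a k
  have := m.2
  omega

/-- The `(m, i)` path of the tiling associated to a big family. -/
def invPath (hk : 0 < k) (G : ABCFamily (k * a) b (c - (k - 1) * a)) (m : Fin k) (i : Fin a) :
    List (ℤ × ℤ) :=
  shiftL ((i : ℤ) - ((i.val * k + m.val : ℕ) : ℤ)) (G.path ⟨i.val * k + m.val, idx_lt hk i m⟩)

lemma invPath_gp (hk : 0 < k) (G : ABCFamily (k * a) b (c - (k - 1) * a)) (m : Fin k)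
    (i : Fin a) :
    GP ((i : ℤ) + 1) (b : ℤ) (((k * a : ℕ) : ℤ) + ((c - (k - 1) * a : ℕ) : ℤ))
      (invPath hk G m i) := by
  have h := (fam_gp G ⟨i.val * k + m.val, idx_lt hk i m⟩).shift
    ((i : ℤ) - ((i.val * k + m.val : ℕ) : ℤ))
  simp only [Fin.val_mk] at h
  have e : ((i.val * k + m.val : ℕ) : ℤ) + 1 + ((i : ℤ) - ((i.val * k + m.val : ℕ) : ℤ)) =
      (i : ℤ) + 1 := by ring
  rw [e] at h
  exact h

lemma mem_invPath (hk : 0 < k) (G : ABCFamily (k * a) b (c - (k - 1) * a)) (m : Fin k)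
    (i : Fin a) {x r : ℤ} :
    (x, r) ∈ invPath hk G m i ↔
      (x - ((i : ℤ) - ((i.val * k + m.val : ℕ) : ℤ)), r) ∈ famQ G (i.val * k + m.val) := by
  rw [invPath, mem_shiftL, famQ_mem G (idx_lt hk i m)]

lemma invPath_sep (hk : 0 < k) (G : ABCFamily (k * a) b (c - (k - 1) * a)) (m : Fin k)
    {i i' : Fin a} (hii : i < i') :
    ∀ x y r : ℤ, (x, r) ∈ invPath hk G m i → (y, r) ∈ invPath hk G m i' → x < y := by
  intro x y r hx hy
  rw [mem_invPath] at hx hy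
  set p1 := i.val * k + m.val with hp1
  set p2 := i'.val * k + m.val with hp2
  have hpp : p1 + k ≤ p2 := by
    have h1 : (i.val + 1) * k ≤ i'.val * k := Nat.mul_le_mul_right k (by exact hii)
    have h2 : (i.val + 1) * k = i.val * k + k := by ring
    omega
  have hc := famQ_chain G (show p1 < p2 by omega) (idx_lt hk i' m) hx hy
  have hio : (i : ℤ) < (i' : ℤ) := by exact_mod_cast hii
  have hsub : ((p2 - p1 : ℕ) : ℤ) = (p2 : ℤ) - (p1 : ℤ) := by
    rw [Nat.cast_sub (by omega)]
  omega

/-- The tiling associated to a big family. -/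
def invFam (hk : 0 < k) (hca : (k - 1) * a ≤ c) (G : ABCFamily (k * a) b (c - (k - 1) * a))
    (m : Fin k) : ABCFamily a b c where
  path i := invPath hk G m i
  chain i := (invPath_gp hk G m i).chain
  head i := (invPath_gp hk G m i).head
  last i := by
    rw [(invPath_gp hk G m i).last]
    congr 1
    rw [Prod.ext_iff]
    refine ⟨by simp; ring, ?_⟩
    simpa using keyN hk hca
  disj i j hne := by
    intro C hCi hCj
    rcases C with ⟨x, r⟩
    rcases lt_or_gt_of_ne hne with h | h
    · exact absurd rfl (ne_of_lt (invPath_sep hk G m h x x r hCi hCj))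
    · exact absurd rfl (ne_of_lt (invPath_sep hk G m h x x r hCj hCi))

lemma invFam_numInter (hk : 0 < k) (hca : (k - 1) * a ≤ c)
    (G : ABCFamily (k * a) b (c - (k - 1) * a)) :
    numInter k (invFam hk hca G) = 0 := by
  rw [numInter_zero_iff]
  rintro α β hab C ⟨⟨i, hR⟩, ⟨j, hO⟩⟩
  have hR' := movesRight_shiftL.mp hR
  have hO' := movesOut_shiftL.mp hO
  rw [(fam_gp G ⟨i.val * k + α.val, idx_lt hk i α⟩).movesRight_iff] at hR'
  rw [(fam_gp G ⟨j.val * k + β.val, idx_lt hk j β⟩).movesOut_iff] at hO'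
  obtain ⟨hu1, hu2⟩ := hR'
  have hv1 := hO'.1
  obtain ⟨u, hu⟩ : ∃ u : ℤ, C.1 - ((i : ℤ) - ((i.val * k + α.val : ℕ) : ℤ)) = u := ⟨_, rfl⟩
  obtain ⟨v, hv⟩ : ∃ v : ℤ, C.1 - ((j : ℤ) - ((j.val * k + β.val : ℕ) : ℤ)) = v := ⟨_, rfl⟩
  obtain ⟨p, hp⟩ : ∃ p : ℕ, i.val * k + α.val = p := ⟨_, rfl⟩
  obtain ⟨q, hq⟩ : ∃ q : ℕ, j.val * k + β.val = q := ⟨_, rfl⟩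
  rw [hu] at hu1 hu2
  rw [hv] at hv1
  have hpk : p < k * a := hp ▸ idx_lt hk i α
  have hqk : q < k * a := hq ▸ idx_lt hk j β
  have hmu1 : (u, C.2) ∈ famQ G p := by
    rw [famQ_mem G hpk]
    convert hu1 using 2
    simpa [Fin.ext_iff] using hp.symm
  have hmu2 : (u + 1, C.2) ∈ famQ G p := by
    rw [famQ_mem G hpk]
    convert hu2 using 2
    simpa [Fin.ext_iff] using hp.symm
  have hmv : (v, C.2) ∈ famQ G q := by
    rw [famQ_mem G hqk]
    convert hv1 using 2
    simpa [Fin.ext_iff] using hq.symm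
  have habv : α.val < β.val := hab
  have hak : α.val < k := α.2
  have hbk : β.val < k := β.2
  have hpz : (p : ℤ) = ((i.val * k : ℕ) : ℤ) + (α.val : ℤ) := by exact_mod_cast hp.symm
  have hqz : (q : ℤ) = ((j.val * k : ℕ) : ℤ) + (β.val : ℤ) := by exact_mod_cast hq.symm
  have e1 : v = u + ((i : ℤ) - (j : ℤ)) + ((q : ℤ) - (p : ℤ)) := by
    rw [← hu, ← hv, ← hp, ← hq]
    push_cast
    ring
  rcases lt_trichotomy p q with hpq | hpq | hpq
  · -- p < q : deduce i > j, contradiction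
    have hc := famQ_chain G hpq hqk hmu2 hmv
    have hsub : ((q - p : ℕ) : ℤ) = (q : ℤ) - (p : ℤ) := Nat.cast_sub (by omega)
    rw [hsub] at hc
    have hij : (j : ℤ) < (i : ℤ) := by linarith
    have hijn : j.val + 1 ≤ i.val := by exact_mod_cast hij
    have h1 : (j.val + 1) * k ≤ i.val * k := Nat.mul_le_mul_right k hijn
    have h2 : (j.val + 1) * k = j.val * k + k := by ring
    omega
  · -- p = q : impossible
    rcases lt_trichotomy i.val j.val with hij | hij | hij
    · have h1 : (i.val + 1) * k ≤ j.val * k := Nat.mul_le_mul_right k (by omega)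
      have h2 : (i.val + 1) * k = i.val * k + k := by ring
      omega
    · have hke : i.val * k = j.val * k := by rw [hij]
      omega
    · have h1 : (j.val + 1) * k ≤ i.val * k := Nat.mul_le_mul_right k (by omega)
      have h2 : (j.val + 1) * k = j.val * k + k := by ring
      omega
  · -- p > q : deduce i ≤ j, contradiction
    have hc := famQ_chain G hpq hpk hmv hmu1
    have hsub : ((p - q : ℕ) : ℤ) = (p : ℤ) - (q : ℤ) := Nat.cast_sub (by omega)
    rw [hsub] at hc
    have hij : (i : ℤ) ≤ (j : ℤ) := by linarith
    have hijn : i.val ≤ j.val := by exact_mod_cast hij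
    rcases Nat.eq_or_lt_of_le hijn with hij2 | hij2
    · have hke : i.val * k = j.val * k := by rw [hij2]
      omega
    · have h1 : (i.val + 1) * k ≤ j.val * k := Nat.mul_le_mul_right k (by omega)
      have h2 : (i.val + 1) * k = i.val * k + k := by ring
      omega

end InvFam

section Main

variable {a b c k : ℕ}

lemma shiftL_add_cancel {t s : ℤ} {l : List (ℤ × ℤ)} (h : t + s = 0) :
    shiftL s (shiftL t l) = l := by
  rw [shiftL_shiftL, h, shiftL_zero]

/-- The big family associated to a `k`-tiling with no interactions. -/
def bigFam (T : Fin k → ABCFamily a b c) (hk : 0 < k) (hca : (k - 1) * a ≤ c)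
    (hni : NoInt T) : ABCFamily (k * a) b (c - (k - 1) * a) where
  path p := bigPath T hk p.val
  chain p := (bigPath_gp T hk p.2).chain
  head p := (bigPath_gp T hk p.2).head
  last p := by
    rw [(bigPath_gp T hk p.2).last]
    congr 1
    rw [Prod.ext_iff]
    constructor
    · simp
      ring
    · simpa using (keyN hk hca).symm
  disj p q hne := by
    intro C hCp hCq
    rcases C with ⟨x, r⟩
    have hvne : p.val ≠ q.val := fun h => hne (Fin.ext h)
    rcases lt_or_gt_of_ne hvne with h | h
    · exact absurd rfl (ne_of_lt (bigPath_sep T hk hni p.val q.val h q.2 x x r hCp hCq))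
    · exact absurd rfl (ne_of_lt (bigPath_sep T hk hni q.val p.val h p.2 x x r hCq hCp))

lemma left_inv_aux (hk : 0 < k) (hca : (k - 1) * a ≤ c) (T : Fin k → ABCFamily a b c)
    (hni : NoInt T) (m : Fin k) :
    invFam hk hca (bigFam T hk hca hni) m = T m := by
  apply ABCFamily.ext'
  funext i
  show invPath hk (bigFam T hk hca hni) m i = (T m).path i
  unfold invPath
  show shiftL _ (bigPath T hk (i.val * k + m.val)) = _
  unfold bigPath
  rw [dif_pos (idx_lt hk i m)]
  have hmod : (i.val * k + m.val) % k = m.val := by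
    rw [Nat.add_comm, Nat.add_mul_mod_self_right]
    exact Nat.mod_eq_of_lt m.2
  have hdiv : (i.val * k + m.val) / k = i.val := by
    rw [Nat.add_comm, Nat.add_mul_div_right _ _ hk, Nat.div_eq_of_lt m.2]
    omega
  simp only [hmod, hdiv, Fin.eta]
  exact shiftL_add_cancel (by push_cast; ring)

lemma right_inv_aux (hk : 0 < k) (hca : (k - 1) * a ≤ c)
    (G : ABCFamily (k * a) b (c - (k - 1) * a)) (p : Fin (k * a)) :
    bigPath (invFam hk hca G) hk p.val = G.path p := by
  unfold bigPath
  rw [dif_pos p.2]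
  show shiftL _ (invPath hk G _ _) = _
  unfold invPath
  have hmd : (p.val / k) * k + p.val % k = p.val := by
    rw [Nat.mul_comm]
    exact Nat.div_add_mod p.val k
  simp only [Fin.val_mk, hmd, Fin.eta]
  exact shiftL_add_cancel (by push_cast; ring)

end Main


/-- If `(k-1)a > c` there are no `k`-tilings of the `a×b×c` hexagon with zero
interactions; if `(k-1)a ≤ c` there is a bijection between `k`-tilings of the `a×b×c`
hexagon with zero interactions and `(ka, b, c-(k-1)a)`-families. -/
theorem hexagon_t_zero_bijection (k a b c : ℕ) (hk : 1 ≤ k) (ha : 1 ≤ a) (hb : 1 ≤ b) :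
    (c < (k - 1) * a → ¬ ∃ T : Fin k → ABCFamily a b c, numInter k T = 0) ∧
    ((k - 1) * a ≤ c →
      Nonempty ({T : Fin k → ABCFamily a b c // numInter k T = 0} ≃
        ABCFamily (k * a) b (c - (k - 1) * a))) := by
  constructor
  · -- impossibility
    rintro hlt ⟨T, hT0⟩
    have hni : NoInt T := (numInter_zero_iff T).mp hT0
    have hQgp : ∀ p, p < k * a → GP ((p : ℤ) + 1) (b : ℤ) ((a : ℤ) + (c : ℤ))
        (bigPath T hk p) := fun p hp => bigPath_gp T hk hp
    have hQsep := bigPath_sep T hk hni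
    have hNka : a + c < k * a := by
      have e : k * a = (k - 1) * a + a := by
        rcases k with _ | k'
        · omega
        · simp only [Nat.succ_sub_one]
          ring
      omega
    -- start from the last cell of path 0
    have hlast : (((0 : ℕ) : ℤ) + 1 + (b : ℤ), (a : ℤ) + (c : ℤ)) ∈ bigPath T hk 0 :=
      (hQgp 0 (by omega)).last_mem
    obtain ⟨m, hm1, hm2⟩ := dualIter hQgp hQsep (a + c - 1) 0 (by omega) _ _ hlast
      (by push_cast; omega)
    have hrow : ((a : ℤ) + (c : ℤ)) - ((a + c - 1 : ℕ) : ℤ) = 1 := by push_cast; omega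
    rw [hrow, Nat.zero_add] at hm2
    have hhead := (hQgp (a + c - 1 + 1) (by omega)).head_mem
    have hfin := hQsep (a + c - 1) (a + c - 1 + 1) (by omega) (by omega) m _ 1 hm2 hhead
    push_cast at hm1 hfin
    omega
  · -- the bijection
    intro hca
    have hk0 : 0 < k := hk
    refine ⟨⟨?_, ?_, ?_, ?_⟩⟩
    · -- toFun
      rintro ⟨T, hT0⟩
      exact bigFam T hk0 hca ((numInter_zero_iff T).mp hT0)
    · -- invFun
      intro G
      exact ⟨invFam hk0 hca G, invFam_numInter hk0 hca G⟩
    · -- left inverse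
      rintro ⟨T, hT0⟩
      apply Subtype.ext
      funext m
      exact left_inv_aux hk0 hca T ((numInter_zero_iff T).mp hT0) m
    · -- right inverse
      intro G
      apply ABCFamily.ext'
      funext p
      exact right_inv_aux hk0 hca G p


end LozengePaths
end

section
/- Let a, b, c ≥ 1 be integers and let (F_1, F_2) be a 2-tiling of the a×b×c hexagon with exactly ab interactions. For c′ ∈ {1,2}, 1 ≤ i ≤ a and 1 ≤ j ≤ b, let r^{(c′)}_{i,j} denote the row of the cell from which the i-th path of F_{c′} makes its j-th rightward move. Then for every 1 ≤ i ≤ a: r^{(1)}_{i,1} ≤ r^{(2)}_{i,1} ≤ r^{(1)}_{i,2} ≤ r^{(2)}_{i,2} ≤ … ≤ r^{(1)}_{i,b} ≤ r^{(2)}_{i,b}. -/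
namespace LozengePaths

/-- The path `l` makes a rightward move at position `n`. -/
def RightAt (l : List (ℤ × ℤ)) (n : ℕ) : Prop :=
  ∃ C : ℤ × ℤ, l[n]? = some C ∧ l[n + 1]? = some (C.1 + 1, C.2)

/-- The (0-indexed) `j`-th rightward move of the path `l` is made from a cell in row `ρ`:
there is a position `n` at which `l` makes a rightward move out of a cell in row `ρ`,
with exactly `j` earlier rightward moves. -/
def NthRightRow (l : List (ℤ × ℤ)) (j : ℕ) (ρ : ℤ) : Prop :=
  ∃ n : ℕ, ∃ C : ℤ × ℤ, l[n]? = some C ∧ l[n + 1]? = some (C.1 + 1, C.2) ∧ C.2 = ρ ∧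
    Nat.card {n' : ℕ // n' < n ∧ RightAt l n'} = j

/-! ### basic step lemmas -/

lemma step_of_chain {l : List (ℤ×ℤ)} (hl : l.Chain' stepRel) {n : ℕ} {cm cn : ℤ×ℤ}
    (h1 : l[n]? = some cm) (h2 : l[n+1]? = some cn) : stepRel cm cn := by
  rw [List.getElem?_eq_some_iff] at h1 h2
  obtain ⟨hn1, e1⟩ := h1; obtain ⟨hn2, e2⟩ := h2
  have := (List.isChain_iff_getElem.1 hl) n (by omega)
  simpa [List.get_eq_getElem, e1, e2] using this

lemma stepRel_facts {cm cn : ℤ×ℤ} (h : stepRel cm cn) :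
    cm.1 ≤ cn.1 ∧ cn.1 ≤ cm.1 + 1 ∧ cm.2 ≤ cn.2 ∧ cn.2 ≤ cm.2 + 1 ∧
      cn.1 + cn.2 = cm.1 + cm.2 + 1 := by
  rcases h with h | h <;> subst h <;> simp <;> omega

lemma mono_of_chain {l : List (ℤ×ℤ)} (hl : l.Chain' stepRel) :
    ∀ (k m : ℕ) {cm cn : ℤ×ℤ}, l[m]? = some cm → l[m+k]? = some cn →
      cm.1 ≤ cn.1 ∧ cm.2 ≤ cn.2 ∧ cn.1 + cn.2 = cm.1 + cm.2 + k := by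
  intro k
  induction k with
  | zero =>
    intro m cm cn h1 h2
    simp only [Nat.add_zero] at h2
    rw [h1] at h2; cases h2; simp
  | succ k ih =>
    intro m cm cn h1 h2
    have hlen : m + k < l.length := by
      have := (List.getElem?_eq_some_iff.1 h2).1; omega
    have h3 : l[m+k]? = some l[m+k] := List.getElem?_eq_getElem hlen
    have hmono := ih m h1 h3
    have hstep := stepRel_facts (step_of_chain hl h3 (by rw [show m+k+1 = m+(k+1) by omega]; exact h2))
    push_cast
    omega

lemma mono' {l : List (ℤ×ℤ)} (hl : l.Chain' stepRel) {m n : ℕ} {cm cn : ℤ×ℤ}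
    (hmn : m ≤ n) (h1 : l[m]? = some cm) (h2 : l[n]? = some cn) :
    cm.1 ≤ cn.1 ∧ cm.2 ≤ cn.2 ∧ cn.1 + cn.2 = cm.1 + cm.2 + ((n - m : ℕ) : ℤ) := by
  obtain ⟨k, rfl⟩ := Nat.exists_eq_add_of_le hmn
  have := mono_of_chain hl k m h1 h2
  simpa using this

/-- If there is a rightward move at position `m` out of `D`, then any cell `E` with
`E.1 ≤ D.1` sits at a position `≤ m`, hence `E.2 ≤ D.2`. -/
lemma row_le_of_col_le {l : List (ℤ×ℤ)} (hl : l.Chain' stepRel) {m n : ℕ} {D E : ℤ×ℤ}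
    (h1 : l[m]? = some D) (h2 : l[m+1]? = some (D.1 + 1, D.2))
    (h3 : l[n]? = some E) (hcol : E.1 ≤ D.1) : E.2 ≤ D.2 := by
  have hmn : n ≤ m := by
    by_contra hc
    have := mono' hl (show m+1 ≤ n by omega) h2 h3
    simp at this; omega
  have := mono' hl hmn h3 h1
  omega

/-- If there is a rightward move at position `m` out of `D`, then any cell `E` with
`D.1 < E.1` sits at a position `≥ m+1`, hence `D.2 ≤ E.2`. -/
lemma row_ge_of_col_gt {l : List (ℤ×ℤ)} (hl : l.Chain' stepRel) {m n : ℕ} {D E : ℤ×ℤ}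
    (h1 : l[m]? = some D) (h2 : l[m+1]? = some (D.1 + 1, D.2))
    (h3 : l[n]? = some E) (hcol : D.1 < E.1) : D.2 ≤ E.2 := by
  have hmn : m + 1 ≤ n := by
    by_contra hc
    have := mono' hl (show n ≤ m by omega) h3 h1
    omega
  have := mono' hl hmn h2 h3
  simp at this; omega


/-! ### family lemmas -/

variable {a b c : ℕ}

lemma path_zero (F : ABCFamily a b c) (i : Fin a) :
    (F.path i)[0]? = some (((i:ℕ):ℤ) + 1, 1) := by
  rw [← List.head?_eq_getElem?]; exact F.head i

lemma path_last (F : ABCFamily a b c) (i : Fin a) :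
    (F.path i)[(F.path i).length - 1]? = some ((b:ℤ) + ((i:ℕ):ℤ) + 1, (a:ℤ) + (c:ℤ)) := by
  rw [← List.getLast?_eq_getElem?]; exact F.last i

lemma path_length (F : ABCFamily a b c) (i : Fin a) :
    (F.path i).length = a + b + c := by
  have h0 := path_zero F i
  have hL := path_last F i
  have hlen : (F.path i).length - 1 < (F.path i).length := by
    have := (List.getElem?_eq_some_iff.1 h0).1; omega
  have := mono' (F.chain i) (Nat.zero_le _) h0 hL
  have hlen' := (List.getElem?_eq_some_iff.1 h0).1
  simp only [Nat.sub_zero] at this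
  omega

lemma path_sum (F : ABCFamily a b c) (i : Fin a) {n : ℕ} {C : ℤ×ℤ}
    (h : (F.path i)[n]? = some C) : C.1 + C.2 = ((i:ℕ):ℤ) + 2 + n := by
  have := mono' (F.chain i) (Nat.zero_le n) (path_zero F i) h
  simp only [Nat.sub_zero] at this
  omega

lemma path_bounds (F : ABCFamily a b c) (i : Fin a) {n : ℕ} {C : ℤ×ℤ}
    (h : (F.path i)[n]? = some C) :
    ((i:ℕ):ℤ) + 1 ≤ C.1 ∧ C.1 ≤ (b:ℤ) + ((i:ℕ):ℤ) + 1 ∧ 1 ≤ C.2 ∧ C.2 ≤ (a:ℤ) + (c:ℤ) := by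
  have h1 := mono' (F.chain i) (Nat.zero_le n) (path_zero F i) h
  have hn : n ≤ (F.path i).length - 1 := by
    have := (List.getElem?_eq_some_iff.1 h).1; omega
  have h2 := mono' (F.chain i) hn h (path_last F i)
  simp only at h1 h2
  omega

lemma path_mem (F : ABCFamily a b c) (i : Fin a) {n : ℕ} {C : ℤ×ℤ}
    (h : (F.path i)[n]? = some C) : C ∈ F.path i := List.mem_of_getElem? h

/-! ### the crossing lemma -/

/-- Non-crossing of the paths of one family: if `i < i'` then, in any fixed column,
the cells of path `i` lie strictly above the cells of path `i'`. -/
lemma crossing (F : ABCFamily a b c) {i i' : Fin a} (hii : i < i')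
    {n n' : ℕ} {C C' : ℤ×ℤ}
    (h : (F.path i)[n]? = some C) (h' : (F.path i')[n']? = some C')
    (hx : C.1 = C'.1) : C'.2 < C.2 := by
  set l := F.path i with hldef
  set l' := F.path i' with hl'def
  have hne : i ≠ i' := ne_of_lt hii
  set d : ℕ := (i' : ℕ) - (i : ℕ) with hd
  have hdpos : (i:ℕ) < (i':ℕ) := hii
  have key : ∀ n₀ : ℕ, ∀ cl cl' : ℤ×ℤ, l[n₀ + d]? = some cl → l'[n₀]? = some cl' →
      cl.1 < cl'.1 := by
    intro n₀
    induction n₀ with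
    | zero =>
      intro cl cl' hc hc'
      simp only [Nat.zero_add] at hc
      have h0' : l'[0]? = some (((i':ℕ):ℤ)+1, 1) := path_zero F i'
      rw [h0'] at hc'; cases hc'
      have hsum := path_sum F i hc
      have hb := path_bounds F i hc
      have hle : cl.1 ≤ ((i':ℕ):ℤ) + 1 := by omega
      rcases lt_or_eq_of_le hle with hlt | heq
      · exact hlt
      · exfalso
        have hcl : cl = (((i':ℕ):ℤ)+1, 1) := by
          have : cl.2 = 1 := by omega
          exact Prod.ext heq this
        exact F.disj i i' hne cl (path_mem F i hc) (hcl ▸ path_mem F i' (path_zero F i'))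
    | succ n₀ ih =>
      intro cl cl' hc hc'
      have hlen1 : n₀ + d < l.length := by
        have := (List.getElem?_eq_some_iff.1 hc).1; omega
      have hlen2 : n₀ < l'.length := by
        have := (List.getElem?_eq_some_iff.1 hc').1; omega
      have hb1 : l[n₀ + d]? = some l[n₀+d] := List.getElem?_eq_getElem hlen1
      have hb2 : l'[n₀]? = some l'[n₀] := List.getElem?_eq_getElem hlen2
      have hih := ih _ _ hb1 hb2
      have hs1 := stepRel_facts (step_of_chain (F.chain i) hb1
        (by rw [show n₀ + d + 1 = n₀ + 1 + d by omega]; exact hc))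
      have hs2 := stepRel_facts (step_of_chain (F.chain i') hb2 hc')
      have hsum1 := path_sum F i hc
      have hsum2 := path_sum F i' hc'
      rcases lt_or_eq_of_le (show cl.1 ≤ cl'.1 by omega) with hlt | heq
      · exact hlt
      · exfalso
        have hcl : cl = cl' := by
          have : cl.2 = cl'.2 := by push_cast at hsum1 hsum2 ⊢; omega
          exact Prod.ext heq this
        exact F.disj i i' hne cl (path_mem F i hc) (hcl ▸ path_mem F i' hc')
  -- now the main argument
  by_contra hcon
  push_neg at hcon
  have hsum1 := path_sum F i h
  have hsum2 := path_sum F i' h'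
  have hnn : n ≤ n' + d := by omega
  have hLl : l.length = a + b + c := path_length F i
  have hLl' : l'.length = a + b + c := path_length F i'
  rcases lt_or_ge (n' + d) l.length with hcase | hcase
  · have hb1 : l[n' + d]? = some l[n'+d] := List.getElem?_eq_getElem hcase
    have hk := key n' _ _ hb1 h'
    have := mono' (F.chain i) hnn h hb1
    omega
  · -- n' + d ≥ l.length : use the last cell of l
    have hdlt : d ≤ l.length - 1 := by
      have : (i':ℕ) < a := i'.isLt
      omega
    set m' : ℕ := l.length - 1 - d with hm'
    have hm'd : m' + d = l.length - 1 := by omega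
    have hm'len : m' < l'.length := by omega
    have hb2 : l'[m']? = some l'[m'] := List.getElem?_eq_getElem hm'len
    have hk := key m' _ _ (by rw [hm'd]; exact path_last F i) hb2
    have hm'n' : m' ≤ n' := by omega
    have := mono' (F.chain i') hm'n' hb2 h'
    have hbnd := path_bounds F i h
    simp only at hk this
    omega


/-! ### counting rightward moves -/

lemma rightCount_card {l : List (ℤ×ℤ)} (hl : l.Chain' stepRel) {s : ℤ×ℤ}
    (h0 : l[0]? = some s) :
    ∀ (n : ℕ) {C : ℤ×ℤ}, l[n]? = some C →
      C.1 = s.1 + (Nat.card {n' : ℕ // n' < n ∧ RightAt l n'} : ℤ) := by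
  intro n
  induction n with
  | zero =>
    intro C h
    rw [h0] at h; cases h
    have : IsEmpty {n' : ℕ // n' < 0 ∧ RightAt l n'} := ⟨fun ⟨_, h, _⟩ => by omega⟩
    rw [Nat.card_of_isEmpty]; simp
  | succ n ih =>
    intro C h
    have hn : n < l.length := by
      have := (List.getElem?_eq_some_iff.1 h).1; omega
    have hB : l[n]? = some l[n] := List.getElem?_eq_getElem hn
    have ihB := ih hB
    have hfin : {n' : ℕ | n' < n ∧ RightAt l n'}.Finite :=
      (Set.finite_Iio n).subset (fun x hx => hx.1)
    have hcard1 : Nat.card {n' : ℕ // n' < n ∧ RightAt l n'}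
        = Set.ncard {n' : ℕ | n' < n ∧ RightAt l n'} := Nat.card_coe_set_eq _
    have hcard2 : Nat.card {n' : ℕ // n' < n + 1 ∧ RightAt l n'}
        = Set.ncard {n' : ℕ | n' < n + 1 ∧ RightAt l n'} := Nat.card_coe_set_eq _
    rcases step_of_chain hl hB h with hup | hright
    · -- upward move : no right move at n, counts agree
      have hnra : ¬ RightAt l n := by
        rintro ⟨D, hD1, hD2⟩
        rw [hB] at hD1
        injection hD1 with hD1
        subst hD1
        rw [h] at hD2
        injection hD2 with hD2
        have := hup.symm.trans hD2
        rw [Prod.ext_iff] at this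
        simp only at this
        omega
      have hset : {n' : ℕ | n' < n + 1 ∧ RightAt l n'} = {n' : ℕ | n' < n ∧ RightAt l n'} := by
        ext n'; simp only [Set.mem_setOf_eq]
        constructor
        · rintro ⟨h1, h2⟩
          refine ⟨?_, h2⟩
          rcases Nat.lt_succ_iff_lt_or_eq.1 h1 with h | rfl
          · exact h
          · exact absurd h2 hnra
        · rintro ⟨h1, h2⟩; exact ⟨by omega, h2⟩
      rw [hcard2, hset, ← hcard1, hup]
      exact ihB
    · -- rightward move
      have hra : RightAt l n := ⟨l[n], hB, by rw [h, hright]⟩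
      have hset : {n' : ℕ | n' < n + 1 ∧ RightAt l n'}
          = insert n {n' : ℕ | n' < n ∧ RightAt l n'} := by
        ext n'; simp only [Set.mem_setOf_eq, Set.mem_insert_iff]
        constructor
        · rintro ⟨hlt, h2⟩
          rcases Nat.lt_succ_iff_lt_or_eq.1 hlt with hlt' | rfl
          · exact Or.inr ⟨hlt', h2⟩
          · exact Or.inl rfl
        · rintro (rfl | ⟨h1, h2⟩)
          · exact ⟨by omega, hra⟩
          · exact ⟨by omega, h2⟩
      have hnotmem : n ∉ {n' : ℕ | n' < n ∧ RightAt l n'} := fun hmem => by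
        simp only [Set.mem_setOf_eq] at hmem; omega
      rw [hcard2, hset, Set.ncard_insert_of_notMem hnotmem hfin, ← hcard1, hright]
      push_cast
      rw [ihB]
      push_cast
      ring

/-- Characterization of `NthRightRow` for the `i`-th path of a family: the `j`-th
rightward move is made from the cell in column `i + 1 + j`. -/
lemma nthRightRow_spec (F : ABCFamily a b c) (i : Fin a) (j : ℕ) {ρ : ℤ}
    (h : NthRightRow (F.path i) j ρ) :
    ∃ n, (F.path i)[n]? = some (((i:ℕ):ℤ)+1+(j:ℤ), ρ) ∧
      (F.path i)[n+1]? = some ((((i:ℕ):ℤ)+1+(j:ℤ)) + 1, ρ) := by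
  obtain ⟨n, C, h1, h2, h3, h4⟩ := h
  have hcol := rightCount_card (F.chain i) (path_zero F i) n h1
  rw [h4] at hcol
  obtain ⟨x, r⟩ := C
  simp only at hcol h2 h3
  subst h3
  have hx : x = ((i:ℕ):ℤ)+1+(j:ℤ) := by rw [hcol]
  refine ⟨n, ?_, ?_⟩
  · rw [← hx]; exact h1
  · rw [← hx]; exact h2


/-- There is at most one rightward move out of any given column. -/
lemma right_unique {l : List (ℤ×ℤ)} (hl : l.Chain' stepRel) {m n : ℕ} {D E : ℤ×ℤ}
    (h1 : l[m]? = some D) (h2 : l[m+1]? = some (D.1 + 1, D.2))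
    (h3 : l[n]? = some E) (h4 : l[n+1]? = some (E.1 + 1, E.2))
    (hcol : D.1 = E.1) : D = E := by
  have hnm : n ≤ m := by
    by_contra hc
    have := mono' hl (show m + 1 ≤ n by omega) h2 h3
    simp only at this; omega
  have hmn : m ≤ n := by
    by_contra hc
    have := mono' hl (show n + 1 ≤ m by omega) h4 h1
    simp only at this; omega
  have : m = n := le_antisymm hmn hnm
  subst this
  rw [h1] at h3
  exact Option.some.inj h3


/-- For a 2-tiling `(F₁, F₂)` of the `a×b×c` hexagon with exactly `ab` interactions,
letting `r^{(c')}_{i,j}` be the row from which the `i`-th path of `F_{c'}` makes its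
`j`-th rightward move, we have
`r^{(1)}_{i,1} ≤ r^{(2)}_{i,1} ≤ r^{(1)}_{i,2} ≤ r^{(2)}_{i,2} ≤ … ≤ r^{(1)}_{i,b} ≤ r^{(2)}_{i,b}`. -/
theorem hexagon_max_interactions_interleaving (a b c : ℕ)
    (ha : 1 ≤ a) (hb : 1 ≤ b) (hc : 1 ≤ c)
    (F₁ F₂ : ABCFamily a b c) (hmax : numInter 2 ![F₁, F₂] = a * b)
    (r₁ r₂ : Fin a → Fin b → ℤ)
    (h₁ : ∀ (i : Fin a) (j : Fin b), NthRightRow (F₁.path i) (j : ℕ) (r₁ i j))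
    (h₂ : ∀ (i : Fin a) (j : Fin b), NthRightRow (F₂.path i) (j : ℕ) (r₂ i j)) :
    ∀ i : Fin a,
      (∀ j : Fin b, r₁ i j ≤ r₂ i j) ∧
      (∀ j : Fin b, ∀ h : (j : ℕ) + 1 < b, r₂ i j ≤ r₁ i ⟨(j : ℕ) + 1, h⟩) := by
  classical
  have spec₁ : ∀ (i : Fin a) (j : Fin b), ∃ n,
      (F₁.path i)[n]? = some (((i:ℕ):ℤ)+1+((j:ℕ):ℤ), r₁ i j) ∧
      (F₁.path i)[n+1]? = some ((((i:ℕ):ℤ)+1+((j:ℕ):ℤ)) + 1, r₁ i j) :=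
    fun i j => nthRightRow_spec F₁ i (j:ℕ) (h₁ i j)
  have spec₂ : ∀ (i : Fin a) (j : Fin b), ∃ n,
      (F₂.path i)[n]? = some (((i:ℕ):ℤ)+1+((j:ℕ):ℤ), r₂ i j) ∧
      (F₂.path i)[n+1]? = some ((((i:ℕ):ℤ)+1+((j:ℕ):ℤ)) + 1, r₂ i j) :=
    fun i j => nthRightRow_spec F₂ i (j:ℕ) (h₂ i j)
  have mr₁ : ∀ (i : Fin a) (j : Fin b),
      movesRight (F₁.path i) (((i:ℕ):ℤ)+1+((j:ℕ):ℤ), r₁ i j) := by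
    intro i j
    obtain ⟨n, hn1, hn2⟩ := spec₁ i j
    exact ⟨n, hn1, hn2⟩
  set S : Set (ℤ×ℤ) := {C | ∃ i, movesRight (F₁.path i) C} with hSdef
  set S₂ : Set (ℤ×ℤ) :=
    {C | (∃ i, movesRight (F₁.path i) C) ∧ (∃ i, movesOut (F₂.path i) C)} with hS₂def
  -- the interaction count is the cardinality of S₂
  have e : {q : Fin 2 × Fin 2 × (ℤ × ℤ) //
      q.1 < q.2.1 ∧ (∃ i, movesRight ((![F₁,F₂] q.1).path i) q.2.2) ∧
        (∃ i, movesOut ((![F₁,F₂] q.2.1).path i) q.2.2)} ≃ S₂ := by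
    refine ⟨fun q => ⟨q.1.2.2, ?_⟩, fun C => ⟨⟨0, 1, (C : ℤ×ℤ)⟩, ?_⟩, ?_, ?_⟩
    · obtain ⟨⟨α, β, C⟩, hq1, hq2, hq3⟩ := q
      have hα : α = 0 := by
        apply Fin.ext
        have h1 : (α:ℕ) < (β:ℕ) := hq1
        have h2 : (β:ℕ) < 2 := β.isLt
        omega
      have hβ : β = 1 := by
        apply Fin.ext
        have h1 : (α:ℕ) < (β:ℕ) := hq1
        have h2 : (β:ℕ) < 2 := β.isLt
        omega
      subst hα; subst hβ
      simp only [Matrix.cons_val_zero, Matrix.cons_val_one, Matrix.head_cons] at hq2 hq3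
      exact ⟨hq2, hq3⟩
    · refine ⟨show (0:Fin 2) < 1 by decide, ?_, ?_⟩
      · simp only [Matrix.cons_val_zero]
        exact C.2.1
      · simp only [Matrix.cons_val_one, Matrix.head_cons]
        exact C.2.2
    · rintro ⟨⟨α, β, C⟩, hq1, hq2, hq3⟩
      have hα : α = 0 := by
        apply Fin.ext
        have h1 : (α:ℕ) < (β:ℕ) := hq1
        have h2 : (β:ℕ) < 2 := β.isLt
        omega
      have hβ : β = 1 := by
        apply Fin.ext
        have h1 : (α:ℕ) < (β:ℕ) := hq1
        have h2 : (β:ℕ) < 2 := β.isLt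
        omega
      subst hα; subst hβ
      rfl
    · intro C
      rfl
  have hmax' : Nat.card S₂ = a * b := by
    have ecard : numInter 2 ![F₁, F₂] = Nat.card S₂ := Nat.card_congr e
    rw [← ecard]; exact hmax
  -- S is the range of the map (i,j) ↦ cell of the j-th rightward move of path i of F₁
  set f : Fin a × Fin b → ℤ×ℤ :=
    fun p => (((p.1:ℕ):ℤ)+1+((p.2:ℕ):ℤ), r₁ p.1 p.2) with hfdef
  have hfmem : ∀ (i : Fin a) (j : Fin b), (((i:ℕ):ℤ)+1+((j:ℕ):ℤ), r₁ i j) ∈ S :=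
    fun i j => ⟨i, mr₁ i j⟩
  have hSr : S = Set.range f := by
    apply Set.Subset.antisymm
    · rintro C ⟨i, n, hn1, hn2⟩
      have hb1 := path_bounds F₁ i hn1
      have hb2 := path_bounds F₁ i hn2
      simp only at hb1 hb2
      obtain ⟨jv, hjvlt, hjve⟩ : ∃ jv : ℕ, jv < b ∧ (jv:ℤ) = C.1 - ((i:ℕ):ℤ) - 1 := by
        refine ⟨(C.1 - ((i:ℕ):ℤ) - 1).toNat, by omega, by omega⟩
      obtain ⟨m, hm1, hm2⟩ := spec₁ i ⟨jv, hjvlt⟩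
      have hDE := right_unique (F₁.chain i) hm1 hm2 hn1 hn2 (by simp only; omega)
      exact ⟨(i, ⟨jv, hjvlt⟩), hDE⟩
    · rintro C ⟨⟨i, j⟩, rfl⟩
      exact hfmem i j
  have hfinj : Function.Injective f := by
    rintro ⟨i, j⟩ ⟨i', j'⟩ hEq
    obtain ⟨n, hn1, _⟩ := spec₁ i j
    obtain ⟨m, hm1, _⟩ := spec₁ i' j'
    have hii : i = i' := by
      by_contra hne
      refine F₁.disj i i' hne _ (path_mem F₁ i hn1) ?_
      have : f (i, j) = (((i':ℕ):ℤ)+1+((j':ℕ):ℤ), r₁ i' j') := hEq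
      rw [show (((i:ℕ):ℤ)+1+((j:ℕ):ℤ), r₁ i j) = f (i, j) from rfl, this]
      exact path_mem F₁ i' hm1
    subst hii
    have hjj : (j:ℕ) = (j':ℕ) := by
      have := congrArg Prod.fst hEq
      simp only [hfdef] at this
      omega
    rw [Prod.ext_iff]
    exact ⟨rfl, Fin.ext hjj⟩
  have hcardS : S.ncard = a * b := by
    rw [hSr, ← Nat.card_coe_set_eq, Nat.card_range_of_injective hfinj]
    simp
  have hfin : S.Finite := by rw [hSr]; exact Set.finite_range f
  have hSeq : S₂ = S := by
    apply Set.eq_of_subset_of_ncard_le (fun C hC => hC.1) _ hfin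
    rw [hcardS, ← Nat.card_coe_set_eq, hmax']
  have key : ∀ (i : Fin a) (j : Fin b),
      ∃ i', movesOut (F₂.path i') (((i:ℕ):ℤ)+1+((j:ℕ):ℤ), r₁ i j) := by
    intro i j
    have hmem : (((i:ℕ):ℤ)+1+((j:ℕ):ℤ), r₁ i j) ∈ S₂ := by
      rw [hSeq]; exact hfmem i j
    exact hmem.2
  -- Part A : r₁ i j ≤ r₂ i j, by strong induction on i
  have A : ∀ (N : ℕ) (i : Fin a), (i:ℕ) < N → ∀ j : Fin b, r₁ i j ≤ r₂ i j := by
    intro N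
    induction N with
    | zero => intro i hi; omega
    | succ N ih =>
      intro i hiN j
      by_contra hcon
      push_neg at hcon
      obtain ⟨n, hc1, hc2⟩ := spec₁ i j
      obtain ⟨i', n', ho1, _⟩ := key i j
      rcases lt_trichotomy i' i with hlt | heq | hgt
      · -- i' < i : contradiction with the induction hypothesis
        have hbo := path_bounds F₂ i' ho1
        simp only at hbo
        obtain ⟨jv, hjvlt, hjve⟩ : ∃ jv : ℕ, jv < b ∧
            ((i':ℕ):ℤ) + 1 + (jv:ℤ) = ((i:ℕ):ℤ) + ((j:ℕ):ℤ) := by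
          have hii' : (i':ℕ) < (i:ℕ) := hlt
          refine ⟨(i:ℕ) + (j:ℕ) - (i':ℕ) - 1, by omega, by push_cast; omega⟩
        obtain ⟨m2, hm21, hm22⟩ := spec₂ i' ⟨jv, hjvlt⟩
        obtain ⟨m1, hm11, hm12⟩ := spec₁ i' ⟨jv, hjvlt⟩
        have hge : r₂ i' ⟨jv, hjvlt⟩ ≤ r₁ i j := by
          have := row_ge_of_col_gt (F₂.chain i') hm21 hm22 ho1 (by simp only; omega)
          simpa using this
        have hcr : r₁ i j < r₁ i' ⟨jv, hjvlt⟩ := by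
          have := crossing F₁ hlt hm12 hc1 (by simp only; omega)
          simpa using this
        have hih := ih i' (by omega) ⟨jv, hjvlt⟩
        omega
      · subst heq
        obtain ⟨m2, hm21, hm22⟩ := spec₂ i' j
        have := row_le_of_col_le (F₂.chain i') hm21 hm22 ho1 (by simp only; omega)
        simp only at this
        omega
      · obtain ⟨m2, hm21, hm22⟩ := spec₂ i j
        have := crossing F₂ hgt hm21 ho1 (by simp only)
        simp only at this
        omega
  -- Part B : r₂ i j ≤ r₁ i (j+1), by downward strong induction on i
  have B : ∀ (N : ℕ) (i : Fin a), a - (i:ℕ) ≤ N →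
      ∀ j : Fin b, ∀ h : (j:ℕ) + 1 < b, r₂ i j ≤ r₁ i ⟨(j:ℕ)+1, h⟩ := by
    intro N
    induction N with
    | zero => intro i hi; have := i.isLt; omega
    | succ N ih =>
      intro i hiN j hj
      set j1 : Fin b := ⟨(j:ℕ)+1, hj⟩ with hj1def
      by_contra hcon
      push_neg at hcon
      obtain ⟨n, hc1, hc2⟩ := spec₁ i j1
      obtain ⟨i', n', ho1, _⟩ := key i j1
      rcases lt_trichotomy i' i with hlt | heq | hgt
      · -- i' < i : crossing for F₂ gives a direct contradiction
        obtain ⟨m2, hm21, hm22⟩ := spec₂ i j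
        have := crossing F₂ hlt ho1 hm22 (by simp only [hj1def]; push_cast; omega)
        simp only at this
        omega
      · subst heq
        obtain ⟨m2, hm21, hm22⟩ := spec₂ i' j
        have := row_ge_of_col_gt (F₂.chain i') hm21 hm22 ho1
          (by simp only [hj1def]; push_cast; omega)
        simp only at this
        omega
      · -- i < i' : contradiction with the induction hypothesis
        have hbo := path_bounds F₂ i' ho1
        simp only at hbo
        have hj1v : ((j1:ℕ):ℤ) = ((j:ℕ):ℤ) + 1 := by simp [hj1def]
        obtain ⟨j2, hj2lt, hj2e⟩ : ∃ j2 : Fin b, (j2:ℕ) + 1 < b ∧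
            ((i':ℕ):ℤ) + 1 + ((j2:ℕ):ℤ) = ((i:ℕ):ℤ) + 1 + ((j1:ℕ):ℤ) := by
          have hii' : (i:ℕ) < (i':ℕ) := hgt
          refine ⟨⟨(i:ℕ) + (j:ℕ) + 1 - (i':ℕ), by omega⟩, ?_, ?_⟩ <;>
            simp only [Fin.val_mk] <;> [omega; (push_cast; omega)]
        obtain ⟨m2, hm21, hm22⟩ := spec₂ i' j2
        obtain ⟨m1, hm11, hm12⟩ := spec₁ i' ⟨(j2:ℕ)+1, hj2lt⟩
        have hle : r₁ i j1 ≤ r₂ i' j2 := by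
          have := row_le_of_col_le (F₂.chain i') hm21 hm22 ho1 (by simp only; omega)
          simpa using this
        have hcr : r₁ i' ⟨(j2:ℕ)+1, hj2lt⟩ < r₁ i j1 := by
          have := crossing F₁ hgt hc2 hm11
            (by simp only [Fin.val_mk]; push_cast; omega)
          simpa using this
        have hih := ih i' (by have := i'.isLt; omega) j2 hj2lt
        omega
  intro i
  exact ⟨fun j => A a i i.isLt j, fun j hj => B a i (by omega) j hj⟩

end LozengePaths
end
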